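/- Let X_1,…,X_n and Y_1,…,Y_n be independent symmetric random vectors with values in a real separable Banach space E such that X_i is (1,1)-dominated by Y_i for each i = 1,…,n, and let ‖·‖ be a continuous norm on E. Then for every t ≥ 0, P( E_ε (‖∑_{i=1}^n ε_i X_i‖ − 1)_+ > t ) ≤ P( E_ε (‖∑_{i=1}^n ε_i Y_i‖ − 1)_+ > t ), where ε₁,…,ε_n are independent Rademacher signs (each uniform on {−1,1}) independent of the X_i and Y_i, E_ε denotes expectation over the signs only, and u_+ = max{u,0}. -/

import Mathlib

open MeasureTheory ProbabilityTheory
open scoped ENNReal BigOperators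

noncomputable section

/-- A continuous norm on a real normed space `E` (a norm possibly different from the
ambient one, required to be continuous with respect to the ambient topology). -/
def IsContNorm {E : Type*} [NormedAddCommGroup E] [NormedSpace ℝ E] (N : E → ℝ) : Prop :=
  Continuous N ∧ (∀ x y : E, N (x + y) ≤ N x + N y) ∧
    (∀ (c : ℝ) (x : E), N (c • x) = |c| * N x) ∧ ∀ x : E, N x = 0 → x = 0

/-- A random vector is symmetric if `X` and `-X` have the same distribution. -/
def IsSymmetricRV {Ω E : Type*} [MeasurableSpace Ω] [MeasurableSpace E] [Neg E]
    (μ : Measure Ω) (X : Ω → E) : Prop :=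
  Measure.map X μ = Measure.map (fun ω => -(X ω)) μ

/-- `X` is `(κ, λ)`-dominated by `Y`: for every continuous norm `N` on `E`,
`P(N(X) > 1) ≤ κ P(λ N(Y) > 1)`. -/
def Dominated {Ω E : Type*} [MeasurableSpace Ω] [NormedAddCommGroup E] [NormedSpace ℝ E]
    (μ : Measure Ω) (κ lam : ℝ) (X Y : Ω → E) : Prop :=
  ∀ N : E → ℝ, IsContNorm N →
    μ {ω | 1 < N (X ω)} ≤ ENNReal.ofReal κ * μ {ω | 1 < lam * N (Y ω)}

/-- The sign vector `(±1)ⁿ` encoded by a Boolean vector; a uniform random `s` gives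
independent Rademacher signs. -/
def signs {n : ℕ} (s : Fin n → Bool) (i : Fin n) : ℝ := if s i then 1 else -1

/-! ### Auxiliary material -/

section Aux

open Set

namespace IsContNorm

variable {E : Type*} [NormedAddCommGroup E] [NormedSpace ℝ E] {N : E → ℝ}

lemma zero (hN : IsContNorm N) : N 0 = 0 := by
  have := hN.2.2.1 0 0; simpa using this

lemma neg (hN : IsContNorm N) (x : E) : N (-x) = N x := by
  have := hN.2.2.1 (-1) x; simpa using this

lemma nonneg (hN : IsContNorm N) (x : E) : 0 ≤ N x := by
  have h := hN.2.1 x (-x); rw [add_neg_cancel, hN.zero, hN.neg] at h; linarith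

lemma sub_le (hN : IsContNorm N) (x y : E) : N x ≤ N y + N (x - y) := by
  have := hN.2.1 y (x - y); simpa using this

lemma exists_bound (hN : IsContNorm N) : ∃ c : ℝ, 0 < c ∧ ∀ x, N x ≤ c * ‖x‖ := by
  have hc := Metric.continuousAt_iff.1 (hN.1.continuousAt (x := 0))
  obtain ⟨δ, hδ, hδ'⟩ := hc 1 one_pos
  refine ⟨2 / δ, by positivity, fun x => ?_⟩
  rcases eq_or_ne x 0 with rfl | hx
  · simp [hN.zero]
  · have hxn : (0:ℝ) < ‖x‖ := norm_pos_iff.2 hx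
    set y : E := (δ / (2 * ‖x‖)) • x with hy
    have hyn : ‖y‖ = δ / 2 := by
      rw [hy, norm_smul, Real.norm_eq_abs, abs_of_pos (by positivity)]
      field_simp
    have h1 : N y < 1 := by
      have := hδ' (x := y) (by simp [dist_eq_norm, hyn]; linarith)
      simpa [dist_eq_norm, hN.zero, abs_of_nonneg (hN.nonneg y)] using this
    have hxy : x = (2 * ‖x‖ / δ) • y := by
      rw [hy, smul_smul]
      rw [show 2 * ‖x‖ / δ * (δ / (2 * ‖x‖)) = 1 by field_simp]
      simp
    calc N x = |2 * ‖x‖ / δ| * N y := by conv_lhs => rw [hxy, hN.2.2.1]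
    _ ≤ (2 * ‖x‖ / δ) * 1 := by
        apply mul_le_mul (le_of_eq (abs_of_pos (by positivity))) h1.le (hN.nonneg _) (by positivity)
    _ = 2 / δ * ‖x‖ := by ring

end IsContNorm

variable {E : Type*} [NormedAddCommGroup E] [NormedSpace ℝ E]

lemma continuous_of_lip {N g : E → ℝ} (hN : IsContNorm N)
    (hlip : ∀ x y, g x ≤ g y + N (x - y)) : Continuous g := by
  rw [continuous_iff_continuousAt]
  intro x₀
  have h1 : Filter.Tendsto (fun x => N (x - x₀)) (nhds x₀) (nhds 0) := by
    have hcont2 : Continuous fun x : E => N (x - x₀) :=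
      hN.1.comp (continuous_id.sub continuous_const)
    have := hcont2.tendsto x₀
    simpa [hN.zero] using this
  rw [ContinuousAt, tendsto_iff_dist_tendsto_zero]
  refine squeeze_zero (fun x => dist_nonneg) (fun x => ?_) h1
  rw [Real.dist_eq, abs_sub_le_iff]
  constructor
  · linarith [hlip x x₀]
  · have := hlip x₀ x
    rw [← neg_sub x x₀, hN.neg] at this
    linarith

section Key

variable [MeasurableSpace E] [OpensMeasurableSpace E]

/-- The one-coordinate comparison: if `μ₁` has smaller tails than `μ₂` for every continuous
norm, then the same holds for the tail of any continuous-norm-like convex even functional. -/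
lemma key_compare (μ₁ μ₂ : Measure E) [IsProbabilityMeasure μ₁] [IsProbabilityMeasure μ₂]
    (hle : ∀ M : E → ℝ, IsContNorm M → μ₁ {x | 1 < M x} ≤ μ₂ {x | 1 < M x})
    {N : E → ℝ} (hN : IsContNorm N) (g : E → ℝ)
    (hlip : ∀ x y, g x ≤ g y + N (x - y))
    (hgrow : ∀ x, N x - 1 ≤ g x)
    (heven : ∀ x, g (-x) = g x)
    (hconv : ∀ (x y : E) (θ : ℝ), 0 ≤ θ → θ ≤ 1 →
      g (θ • x + (1 - θ) • y) ≤ θ * g x + (1 - θ) * g y)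
    (t : ℝ) (ht : 0 ≤ t) :
    μ₁ {x | t < g x} ≤ μ₂ {x | t < g x} := by
  have hgcont : Continuous g := continuous_of_lip hN hlip
  have hg0min : ∀ x, g 0 ≤ g x := by
    intro x
    have h := hconv x (-x) (1/2) (by norm_num) (by norm_num)
    have hx : (1/2 : ℝ) • x + (1 - 1/2 : ℝ) • (-x) = 0 := by
      rw [show (1 - 1/2 : ℝ) = 1/2 by norm_num, smul_neg]
      simp
    rw [hx, heven] at h
    linarith
  by_cases h0 : g 0 ≤ t
  swap
  · push_neg at h0
    have huniv : ∀ x : E, t < g x := fun x => lt_of_lt_of_le h0 (hg0min x)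
    have h1 : {x : E | t < g x} = univ := eq_univ_of_forall huniv
    rw [h1]
    simp
  -- main case
  have main : ∀ ε : ℝ, 0 < ε → μ₁ {x | t + ε < g x} ≤ μ₂ {x | t < g x} := by
    intro ε hε
    set C : Set E := {x | ∃ c, g c ≤ t ∧ N (x - c) ≤ ε} with hC
    have hscale : ∀ c : E, g c ≤ t → ∀ a : ℝ, |a| ≤ 1 → g (a • c) ≤ t := by
      intro c hc a ha
      rcases le_total 0 a with h | h
      · have := hconv c 0 a h (by rw [abs_of_nonneg h] at ha; exact ha)
        rw [smul_zero, add_zero] at this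
        have ha1 : a ≤ 1 := by rw [abs_of_nonneg h] at ha; exact ha
        nlinarith [hg0min c, hconv c 0 a h ha1]
      · have ha' : |(-a)| ≤ 1 := by rwa [abs_neg]
        have h' : (0:ℝ) ≤ -a := by linarith
        have ha1 : -a ≤ 1 := by rw [abs_of_nonneg h'] at ha'; exact ha'
        have hgc : g (-c) ≤ t := by rw [heven]; exact hc
        have := hconv (-c) 0 (-a) h' ha1
        rw [smul_zero, add_zero, smul_neg, neg_smul, neg_neg] at this
        nlinarith [hg0min (-c)]
    have hconvex : Convex ℝ C := by
      rintro x ⟨c, hc, hxc⟩ y ⟨d, hd, hyd⟩ a b ha hb hab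
      have hb' : b = 1 - a := by linarith
      refine ⟨a • c + b • d, ?_, ?_⟩
      · subst hb'
        have := hconv c d a ha (by linarith)
        nlinarith
      · have hrw : a • x + b • y - (a • c + b • d) = a • (x - c) + b • (y - d) := by
          module
        rw [hrw]
        calc N (a • (x - c) + b • (y - d)) ≤ N (a • (x - c)) + N (b • (y - d)) := hN.2.1 _ _
        _ = a * N (x - c) + b * N (y - d) := by
            rw [hN.2.2.1, hN.2.2.1, abs_of_nonneg ha, abs_of_nonneg hb]
        _ ≤ a * ε + b * ε := by
            apply add_le_add <;> apply mul_le_mul_of_nonneg_left <;> assumption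
        _ = ε := by rw [← add_mul, hab, one_mul]
    obtain ⟨cb, hcb, hcbb⟩ := hN.exists_bound
    have hmem0 : C ∈ nhds (0 : E) := by
      apply Filter.mem_of_superset (Metric.ball_mem_nhds (0:E) (show 0 < ε / cb by positivity))
      intro x hx
      refine ⟨0, h0, ?_⟩
      rw [sub_zero]
      calc N x ≤ cb * ‖x‖ := hcbb x
      _ ≤ cb * (ε / cb) := by
          apply mul_le_mul_of_nonneg_left _ hcb.le
          simpa [dist_eq_norm] using (Metric.mem_ball.1 hx).le
      _ = ε := by field_simp
    have habs : Absorbent ℝ C := absorbent_nhds_zero hmem0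
    have hbal : Balanced ℝ C := by
      rw [balanced_iff_smul_mem]
      rintro a ha x ⟨c, hc, hxc⟩
      refine ⟨a • c, hscale c hc a (by rwa [Real.norm_eq_abs] at ha), ?_⟩
      have hrw : a • x - a • c = a • (x - c) := by module
      rw [hrw, hN.2.2.1]
      calc |a| * N (x - c) ≤ 1 * N (x - c) := by
            apply mul_le_mul_of_nonneg_right _ (hN.nonneg _)
            rwa [Real.norm_eq_abs] at ha
      _ ≤ ε := by rwa [one_mul]
    set M := gauge C with hM
    have hMbound : ∀ z ∈ C, N z ≤ t + 1 + ε := by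
      rintro z ⟨c, hc, hzc⟩
      have h1 := hN.sub_le z c
      have h2 := hgrow c
      linarith
    have hMdef : ∀ x, M x = 0 → x = 0 := by
      intro x hx
      have hNx : ∀ δ : ℝ, 0 < δ → N x ≤ δ * (t + 1 + ε) := by
        intro δ hδ
        obtain ⟨r, hr0, hrδ, z, hz, rfl⟩ := exists_lt_of_gauge_lt habs (by rw [← hM, hx]; exact hδ)
        rw [hN.2.2.1, abs_of_pos hr0]
        have := hMbound z hz
        have h1 : 0 ≤ N z := hN.nonneg z
        nlinarith
      have hK : (0:ℝ) < t + 1 + ε := by linarith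
      have : N x ≤ 0 := by
        by_contra hcon
        push_neg at hcon
        have h3 := hNx (N x / (2 * (t + 1 + ε))) (by positivity)
        have heq : N x / (2 * (t + 1 + ε)) * (t + 1 + ε) = N x / 2 := by
          field_simp
        rw [heq] at h3
        linarith
      exact hN.2.2.2 x (le_antisymm this (hN.nonneg x))
    have hMnorm : IsContNorm M := by
      refine ⟨continuous_gauge hconvex hmem0, gauge_add_le hconvex habs, fun c x => ?_, hMdef⟩
      rw [hM, gauge_smul hbal, Real.norm_eq_abs]
    have hsub1 : {x : E | 1 < M x} ⊆ {x | t < g x} := by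
      intro x hx
      by_contra h
      rw [mem_setOf_eq, not_lt] at h
      have hxC : x ∈ C := ⟨x, h, by simp [hN.zero, hε.le]⟩
      exact absurd (gauge_le_one_of_mem hxC) (not_le.2 hx)
    have hsub2 : {x : E | t + ε < g x} ⊆ {x | 1 < M x} := by
      intro x hx
      by_contra h
      rw [mem_setOf_eq, not_lt] at h
      have hxcl : x ∈ closure C := (gauge_le_one_iff_mem_closure hconvex hmem0).1 h
      have hsubset : C ⊆ {y : E | g y ≤ t + ε} := by
        rintro y ⟨c, hc, hyc⟩
        have := hlip y c
        simp only [mem_setOf_eq]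
        linarith
      have hclosed : IsClosed {y : E | g y ≤ t + ε} := isClosed_le hgcont continuous_const
      have := closure_minimal hsubset hclosed hxcl
      simp only [mem_setOf_eq] at this hx
      linarith
    calc μ₁ {x | t + ε < g x} ≤ μ₁ {x | 1 < M x} := measure_mono hsub2
    _ ≤ μ₂ {x | 1 < M x} := hle M hMnorm
    _ ≤ μ₂ {x | t < g x} := measure_mono hsub1
  have hU : {x : E | t < g x} = ⋃ k : ℕ, {x | t + ((k : ℝ) + 1)⁻¹ < g x} := by
    ext x
    simp only [mem_setOf_eq, mem_iUnion]
    constructor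
    · intro hx
      obtain ⟨k, hk⟩ := exists_nat_one_div_lt (show (0:ℝ) < g x - t by linarith)
      exact ⟨k, by rw [one_div] at hk; linarith⟩
    · rintro ⟨k, hk⟩
      have : (0:ℝ) < ((k:ℝ) + 1)⁻¹ := by positivity
      linarith
  have hmono : Monotone fun k : ℕ => {x : E | t + ((k : ℝ) + 1)⁻¹ < g x} := by
    intro a b hab x hx
    simp only [mem_setOf_eq] at *
    have hab' : ((a:ℝ)) ≤ b := Nat.cast_le.2 hab
    have h1 : ((b:ℝ) + 1)⁻¹ ≤ ((a:ℝ) + 1)⁻¹ := by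
      apply inv_anti₀ (by positivity)
      linarith
    linarith
  calc μ₁ {x | t < g x} = ⨆ k : ℕ, μ₁ {x | t + ((k : ℝ) + 1)⁻¹ < g x} := by
        rw [hU]; exact Directed.measure_iUnion hmono.directed_le
  _ ≤ μ₂ {x | t < g x} := iSup_le fun k => main _ (by positivity)

end Key

/-! ### Real auxiliary inequalities -/

lemma max_lip {a b d : ℝ} (h : a ≤ b + d) (hd : 0 ≤ d) :
    max (a - 1) 0 ≤ max (b - 1) 0 + d := by
  have h1 := le_max_left (b-1) 0
  have h2 := le_max_right (b-1) 0
  apply max_le <;> linarith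

lemma max_pair {a b c : ℝ} (h : 2*c ≤ a + b) :
    2*(c-1) ≤ max (a-1) 0 + max (b-1) 0 := by
  have h1 := le_max_left (a-1) 0
  have h2 := le_max_left (b-1) 0
  linarith

lemma max_conv {a b e θ : ℝ} (hθ0 : 0 ≤ θ) (hθ1 : θ ≤ 1) (h : e ≤ θ*a + (1-θ)*b) :
    max (e-1) 0 ≤ θ * max (a-1) 0 + (1-θ) * max (b-1) 0 := by
  have h1 : θ*(a-1) ≤ θ*max (a-1) 0 := mul_le_mul_of_nonneg_left (le_max_left _ _) hθ0
  have h2 : (1-θ)*(b-1) ≤ (1-θ)*max (b-1) 0 :=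
    mul_le_mul_of_nonneg_left (le_max_left _ _) (by linarith)
  have h3 : 0 ≤ θ*max (a-1) 0 := mul_nonneg hθ0 (le_max_right _ _)
  have h4 : 0 ≤ (1-θ)*max (b-1) 0 := mul_nonneg (by linarith) (le_max_right _ _)
  apply max_le <;> nlinarith

/-! ### The averaged functional and its one-coordinate sections -/

section SectionFun

variable {n : ℕ} (N : E → ℝ) (k : Fin n) (x : Fin n → E)

/-- The proxy functional `y ↦ 2⁻ⁿ ∑_ε (N(∑ εᵢ yᵢ) − 1)₊`. -/
def Fav : (Fin n → E) → ℝ :=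
  fun y => (∑ s : Fin n → Bool, max (N (∑ i, signs s i • y i) - 1) 0) / 2^n

def Aoff (s : Fin n → Bool) : E := ∑ i ∈ Finset.univ.erase k, signs s i • x i

def bflip (s : Fin n → Bool) : Fin n → Bool := Function.update s k (!(s k))

lemma bflip_invol : Function.Involutive (bflip k) := by
  intro s; funext j
  rcases eq_or_ne j k with rfl | hj
  · simp [bflip]
  · simp [bflip, Function.update_of_ne hj]

def bflipEquiv : Equiv.Perm (Fin n → Bool) := (bflip_invol k).toPerm _

@[simp] lemma bflipEquiv_apply (s : Fin n → Bool) : bflipEquiv k s = bflip k s := rfl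

lemma signs_bflip_k (s : Fin n → Bool) : signs (bflip k s) k = - signs s k := by
  simp only [signs, bflip, Function.update_self]
  cases s k <;> simp

lemma Aoff_bflip (s : Fin n → Bool) : Aoff k x (bflip k s) = Aoff k x s := by
  apply Finset.sum_congr rfl
  intro i hi
  have hik : i ≠ k := Finset.ne_of_mem_erase hi
  simp [signs, bflip, Function.update_of_ne hik]

lemma abs_signs (s : Fin n → Bool) (i : Fin n) : |signs s i| = 1 := by
  simp only [signs]; split <;> simp

lemma N_signs_smul (hN : IsContNorm N) (s : Fin n → Bool) (v : E) :
    N (signs s k • v) = N v := by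
  rw [hN.2.2.1, abs_signs, one_mul]

lemma sum_update (s : Fin n → Bool) (v : E) :
    ∑ i, signs s i • (Function.update x k v) i = signs s k • v + Aoff k x s := by
  have hfun : ∀ j, signs s j • (Function.update x k v) j
      = Function.update (fun i => signs s i • x i) k (signs s k • v) j := by
    intro j
    rcases eq_or_ne j k with rfl | hj
    · simp
    · simp [Function.update_of_ne hj]
  rw [Finset.sum_congr rfl (fun j _ => hfun j)]
  rw [Finset.sum_update_of_mem (Finset.mem_univ k)]
  simp [Aoff, Finset.erase_eq]

lemma card_signs' : (Fintype.card (Fin n → Bool) : ℝ) = 2^n := by simp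

lemma sec_lip (hN : IsContNorm N) (v w : E) :
    Fav N (Function.update x k v) ≤ Fav N (Function.update x k w) + N (v - w) := by
  unfold Fav
  simp only [sum_update]
  have h2 : (0:ℝ) < 2^n := by positivity
  have hterm : ∀ s : Fin n → Bool,
      max (N (signs s k • v + Aoff k x s) - 1) 0
        ≤ max (N (signs s k • w + Aoff k x s) - 1) 0 + N (v - w) := by
    intro s
    apply max_lip _ (hN.nonneg _)
    have h1 := hN.sub_le (signs s k • v + Aoff k x s) (signs s k • w + Aoff k x s)
    rw [show (signs s k • v + Aoff k x s) - (signs s k • w + Aoff k x s)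
        = signs s k • (v - w) by module, N_signs_smul N k hN] at h1
    exact h1
  have hsum := Finset.sum_le_sum (s := (Finset.univ : Finset (Fin n → Bool))) (fun s _ => hterm s)
  rw [Finset.sum_add_distrib, Finset.sum_const, Finset.card_univ, nsmul_eq_mul,
    card_signs' (n := n)] at hsum
  rw [div_le_iff₀ h2, add_mul, div_mul_cancel₀ _ (ne_of_gt h2)]
  linarith

lemma sec_grow (hN : IsContNorm N) (v : E) :
    N v - 1 ≤ Fav N (Function.update x k v) := by
  unfold Fav
  simp only [sum_update]
  have h2 : (0:ℝ) < 2^n := by positivity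
  have hflip : ∑ s : Fin n → Bool, max (N (signs (bflip k s) k • v + Aoff k x (bflip k s)) - 1) 0
      = ∑ s : Fin n → Bool, max (N (signs s k • v + Aoff k x s) - 1) 0 :=
    Equiv.sum_comp (bflipEquiv k) (fun s => max (N (signs s k • v + Aoff k x s) - 1) 0)
  have hpair : ∀ s : Fin n → Bool, 2*(N v - 1) ≤
      max (N (signs s k • v + Aoff k x s) - 1) 0
        + max (N (signs (bflip k s) k • v + Aoff k x (bflip k s)) - 1) 0 := by
    intro s
    rw [signs_bflip_k, Aoff_bflip]
    apply max_pair
    have h := hN.2.1 (signs s k • v + Aoff k x s) (-(-signs s k • v + Aoff k x s))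
    rw [hN.neg] at h
    rw [show (signs s k • v + Aoff k x s) + -(-signs s k • v + Aoff k x s)
        = (2 * signs s k) • v by module] at h
    rw [hN.2.2.1, abs_mul, abs_signs, abs_two, mul_one] at h
    linarith
  have hsum := Finset.sum_le_sum (s := (Finset.univ : Finset (Fin n → Bool)))
    (fun s _ => hpair s)
  rw [Finset.sum_const, Finset.card_univ, nsmul_eq_mul, card_signs' (n := n),
    Finset.sum_add_distrib, hflip] at hsum
  rw [le_div_iff₀ h2]
  nlinarith

lemma sec_even (hN : IsContNorm N) (v : E) :
    Fav N (Function.update x k (-v)) = Fav N (Function.update x k v) := by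
  unfold Fav
  simp only [sum_update]
  congr 1
  rw [← Equiv.sum_comp (bflipEquiv k)
    (fun s => max (N (signs s k • v + Aoff k x s) - 1) 0)]
  apply Finset.sum_congr rfl
  intro s _
  simp only [bflipEquiv_apply, signs_bflip_k, Aoff_bflip]
  rw [smul_neg, ← neg_smul]

lemma sec_conv (hN : IsContNorm N) (v w : E) (θ : ℝ) (hθ0 : 0 ≤ θ) (hθ1 : θ ≤ 1) :
    Fav N (Function.update x k (θ • v + (1-θ) • w))
      ≤ θ * Fav N (Function.update x k v) + (1-θ) * Fav N (Function.update x k w) := by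
  unfold Fav
  simp only [sum_update]
  have h2 : (0:ℝ) < 2^n := by positivity
  have hterm : ∀ s : Fin n → Bool,
      max (N (signs s k • (θ • v + (1-θ) • w) + Aoff k x s) - 1) 0
        ≤ θ * max (N (signs s k • v + Aoff k x s) - 1) 0
          + (1-θ) * max (N (signs s k • w + Aoff k x s) - 1) 0 := by
    intro s
    apply max_conv hθ0 hθ1
    have hid : signs s k • (θ • v + (1-θ) • w) + Aoff k x s
        = θ • (signs s k • v + Aoff k x s) + (1-θ) • (signs s k • w + Aoff k x s) := by
      module
    rw [hid]
    have h := hN.2.1 (θ • (signs s k • v + Aoff k x s)) ((1-θ) • (signs s k • w + Aoff k x s))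
    rw [hN.2.2.1, hN.2.2.1, abs_of_nonneg hθ0, abs_of_nonneg (by linarith : (0:ℝ) ≤ 1-θ)] at h
    exact h
  have hsum := Finset.sum_le_sum (s := (Finset.univ : Finset (Fin n → Bool)))
    (fun s _ => hterm s)
  rw [Finset.sum_add_distrib, ← Finset.mul_sum, ← Finset.mul_sum] at hsum
  rw [← mul_div_assoc, ← mul_div_assoc, ← add_div]
  gcongr

lemma Fav_continuous (hN : IsContNorm N) : Continuous (Fav N : (Fin n → E) → ℝ) := by
  apply Continuous.div_const
  apply continuous_finset_sum
  intro s _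
  apply Continuous.max _ continuous_const
  apply Continuous.sub _ continuous_const
  exact hN.1.comp (continuous_finset_sum _ fun i _ => (continuous_apply i).const_smul (signs s i))

end SectionFun

/-! ### Product-measure comparison -/

lemma map_eq_pi {Ω E₀ : Type*} [MeasurableSpace Ω] [MeasurableSpace E₀]
    (μ : Measure Ω) [IsProbabilityMeasure μ] {n : ℕ} (X : Fin n → Ω → E₀)
    (hX : ∀ i, Measurable (X i))
    (hind : iIndepFun X μ) :
    Measure.map (fun ω i => X i ω) μ = Measure.pi (fun i => Measure.map (X i) μ) := by
  haveI : ∀ i, IsProbabilityMeasure (Measure.map (X i) μ) :=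
    fun i => Measure.isProbabilityMeasure_map (hX i).aemeasurable
  refine (Measure.pi_eq fun s hs => ?_).symm
  rw [Measure.map_apply (measurable_pi_lambda _ hX) (MeasurableSet.univ_pi hs)]
  have hpre : (fun ω i => X i ω) ⁻¹' Set.pi Set.univ s = ⋂ i ∈ Finset.univ, X i ⁻¹' s i := by
    ext ω; simp [Set.mem_univ_pi]
  rw [hpre, hind.measure_inter_preimage_eq_mul Finset.univ (fun i _ => hs i)]
  exact Finset.prod_congr rfl fun i _ => (Measure.map_apply (hX i) (hs i)).symm

section PiStep

variable [MeasurableSpace E] [BorelSpace E] [SecondCountableTopology E]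

lemma pi_step {n : ℕ} {N : E → ℝ} (hN : IsContNorm N) (t : ℝ) (ht : 0 ≤ t)
    (α β : Fin n → Measure E) [∀ i, IsProbabilityMeasure (α i)]
    [∀ i, IsProbabilityMeasure (β i)]
    (k : Fin n) (hoff : ∀ i, i ≠ k → α i = β i)
    (hk : ∀ M : E → ℝ, IsContNorm M → α k {x | 1 < M x} ≤ β k {x | 1 < M x}) :
    Measure.pi α {y | t < Fav N y} ≤ Measure.pi β {y | t < Fav N y} := by
  have hS : MeasurableSet {y : Fin n → E | t < Fav N y} :=
    (isOpen_lt continuous_const (Fav_continuous N hN)).measurableSet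
  set S := {y : Fin n → E | t < Fav N y} with hSdef
  set f : (Fin n → E) → ℝ≥0∞ := S.indicator 1 with hf
  have hfm : Measurable f := measurable_one.indicator hS
  have hrew : ∀ (ν : Measure E) (x : Fin n → E),
      ∫⁻ v, f (Function.update x k v) ∂ν = ν {v | t < Fav N (Function.update x k v)} := by
    intro ν x
    have hpre : MeasurableSet {v : E | t < Fav N (Function.update x k v)} :=
      hS.preimage (measurable_update x)
    have : (fun v => f (Function.update x k v))
        = ({v : E | t < Fav N (Function.update x k v)}).indicator 1 := by
      funext v
      by_cases hv : t < Fav N (Function.update x k v) <;>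
        simp [hf, Set.indicator, hSdef, hv]
    rw [this]
    exact lintegral_indicator_one hpre
  have hcongr : ∀ G : (Fin n → E) → ℝ≥0∞,
      (∫⋯∫⁻_Finset.univ.erase k, G ∂α) = (∫⋯∫⁻_Finset.univ.erase k, G ∂β) := by
    intro G
    unfold MeasureTheory.lmarginal
    rw [show (fun i : {j // j ∈ Finset.univ.erase k} => α i.1)
        = (fun i : {j // j ∈ Finset.univ.erase k} => β i.1) from
      funext fun i => hoff i.1 (Finset.ne_of_mem_erase i.2)]
  have hmono : (∫⋯∫⁻_Finset.univ.erase k,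
        (fun x => ∫⁻ xᵢ, f (Function.update x k xᵢ) ∂α k) ∂α)
      ≤ (∫⋯∫⁻_Finset.univ.erase k,
        (fun x => ∫⁻ xᵢ, f (Function.update x k xᵢ) ∂β k) ∂α) := by
    apply lmarginal_mono
    intro x
    dsimp only
    rw [hrew (α k) x, hrew (β k) x]
    exact key_compare (α k) (β k) hk hN (fun v => Fav N (Function.update x k v))
      (sec_lip N k x hN) (sec_grow N k x hN) (sec_even N k x hN)
      (fun v w θ h1 h2 => sec_conv N k x hN v w θ h1 h2) t ht
  calc Measure.pi α S = ∫⁻ y, f y ∂Measure.pi α := (lintegral_indicator_one hS).symm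
  _ = (∫⋯∫⁻_Finset.univ, f ∂α) (fun _ => 0) := lintegral_eq_lmarginal_univ _
  _ = (∫⋯∫⁻_Finset.univ.erase k,
        (fun x => ∫⁻ xᵢ, f (Function.update x k xᵢ) ∂α k) ∂α) (fun _ => 0) :=
      congrFun (lmarginal_erase' (μ := α) f hfm (Finset.mem_univ k)) _
  _ ≤ (∫⋯∫⁻_Finset.univ.erase k,
        (fun x => ∫⁻ xᵢ, f (Function.update x k xᵢ) ∂β k) ∂α) (fun _ => 0) :=
      hmono _
  _ = (∫⋯∫⁻_Finset.univ.erase k,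
        (fun x => ∫⁻ xᵢ, f (Function.update x k xᵢ) ∂β k) ∂β) (fun _ => 0) := by
      rw [hcongr]
  _ = (∫⋯∫⁻_Finset.univ, f ∂β) (fun _ => 0) :=
      (congrFun (lmarginal_erase' (μ := β) f hfm (Finset.mem_univ k)) _).symm
  _ = ∫⁻ y, f y ∂Measure.pi β := (lintegral_eq_lmarginal_univ _).symm
  _ = Measure.pi β S := lintegral_indicator_one hS

end PiStep

end Aux

/-- **Corollary (tail comparison for the proxy).** If `Xᵢ ≺_(1,1) Yᵢ` for independent
symmetric random vectors and `N` is a continuous norm, then for every `t ≥ 0`,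
`P(E_ε (N(∑ εᵢXᵢ) − 1)₊ > t) ≤ P(E_ε (N(∑ εᵢYᵢ) − 1)₊ > t)`, the expectation over
independent uniform signs being the average over all `2ⁿ` sign patterns. -/
theorem proxy_tail_comparison
    {Ω E : Type*} [MeasurableSpace Ω] [NormedAddCommGroup E] [NormedSpace ℝ E]
    [CompleteSpace E] [TopologicalSpace.SeparableSpace E] [MeasurableSpace E] [BorelSpace E]
    (μ : Measure Ω) [IsProbabilityMeasure μ] (n : ℕ)
    (X Y : Fin n → Ω → E)
    (hXmeas : ∀ i, Measurable (X i)) (hYmeas : ∀ i, Measurable (Y i))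
    (hXindep : iIndepFun X μ)
    (hYindep : iIndepFun Y μ)
    (hXsymm : ∀ i, IsSymmetricRV μ (X i)) (hYsymm : ∀ i, IsSymmetricRV μ (Y i))
    (hdom : ∀ i, Dominated μ 1 1 (X i) (Y i))
    (N : E → ℝ) (hN : IsContNorm N)
    (t : ℝ) (ht : 0 ≤ t) :
    μ {ω | t < (∑ s : Fin n → Bool, max (N (∑ i, signs s i • X i ω) - 1) 0) / 2 ^ n}
      ≤ μ {ω | t < (∑ s : Fin n → Bool, max (N (∑ i, signs s i • Y i ω) - 1) 0) / 2 ^ n} := by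
  haveI : SecondCountableTopology E := UniformSpace.secondCountable_of_separable E
  classical
  haveI hprobX : ∀ i, IsProbabilityMeasure (Measure.map (X i) μ) :=
    fun i => Measure.isProbabilityMeasure_map (hXmeas i).aemeasurable
  haveI hprobY : ∀ i, IsProbabilityMeasure (Measure.map (Y i) μ) :=
    fun i => Measure.isProbabilityMeasure_map (hYmeas i).aemeasurable
  have hS : MeasurableSet {y : Fin n → E | t < Fav N y} :=
    (isOpen_lt continuous_const (Fav_continuous N hN)).measurableSet
  have hXeq : μ {ω | t < (∑ s : Fin n → Bool, max (N (∑ i, signs s i • X i ω) - 1) 0) / 2 ^ n}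
      = Measure.pi (fun i => Measure.map (X i) μ) {y | t < Fav N y} := by
    rw [show {ω | t < (∑ s : Fin n → Bool, max (N (∑ i, signs s i • X i ω) - 1) 0) / 2 ^ n}
      = (fun ω i => X i ω) ⁻¹' {y | t < Fav N y} from rfl]
    rw [← Measure.map_apply (measurable_pi_lambda _ hXmeas) hS,
      map_eq_pi μ X hXmeas hXindep]
  have hYeq : μ {ω | t < (∑ s : Fin n → Bool, max (N (∑ i, signs s i • Y i ω) - 1) 0) / 2 ^ n}
      = Measure.pi (fun i => Measure.map (Y i) μ) {y | t < Fav N y} := by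
    rw [show {ω | t < (∑ s : Fin n → Bool, max (N (∑ i, signs s i • Y i ω) - 1) 0) / 2 ^ n}
      = (fun ω i => Y i ω) ⁻¹' {y | t < Fav N y} from rfl]
    rw [← Measure.map_apply (measurable_pi_lambda _ hYmeas) hS,
      map_eq_pi μ Y hYmeas hYindep]
  rw [hXeq, hYeq]
  set γ : ℕ → Fin n → Measure E :=
    fun m i => if (i:ℕ) < m then Measure.map (Y i) μ else Measure.map (X i) μ with hγ
  have hprobγ : ∀ m i, IsProbabilityMeasure (γ m i) := by
    intro m i
    simp only [hγ]
    split <;> infer_instance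
  have hstep : ∀ m, Measure.pi (γ m) {y | t < Fav N y}
      ≤ Measure.pi (γ (m+1)) {y | t < Fav N y} := by
    intro m
    haveI : ∀ i, IsProbabilityMeasure (γ m i) := hprobγ m
    haveI : ∀ i, IsProbabilityMeasure (γ (m+1) i) := hprobγ (m+1)
    by_cases hm : m < n
    · have hoff : ∀ i, i ≠ (⟨m, hm⟩ : Fin n) → γ m i = γ (m+1) i := by
        intro i hik
        have hval : (i:ℕ) ≠ m := fun h => hik (Fin.ext h)
        simp only [hγ]
        by_cases h1 : (i:ℕ) < m
        · rw [if_pos h1, if_pos (Nat.lt_succ_of_lt h1)]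
        · rw [if_neg h1, if_neg
            (fun h2 => h1 (lt_of_le_of_ne (Nat.lt_succ_iff.1 h2) hval))]
      apply pi_step hN t ht (γ m) (γ (m+1)) ⟨m, hm⟩ hoff
      intro M hM
      have hkm : γ m ⟨m, hm⟩ = Measure.map (X ⟨m, hm⟩) μ := by
        simp only [hγ]
        rw [if_neg (by simp)]
      have hkm1 : γ (m+1) ⟨m, hm⟩ = Measure.map (Y ⟨m, hm⟩) μ := by
        simp only [hγ]
        rw [if_pos (by simp)]
      rw [hkm, hkm1]
      have hMS : MeasurableSet {x : E | 1 < M x} :=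
        (isOpen_lt continuous_const hM.1).measurableSet
      rw [Measure.map_apply (hXmeas _) hMS, Measure.map_apply (hYmeas _) hMS]
      have hd := hdom ⟨m, hm⟩ M hM
      simpa using hd
    · push_neg at hm
      have hγeq : γ m = γ (m+1) := by
        funext i
        have h1 : (i:ℕ) < m := lt_of_lt_of_le i.2 hm
        simp only [hγ]
        rw [if_pos h1, if_pos (Nat.lt_succ_of_lt h1)]
      rw [hγeq]
  have hchain : ∀ m, Measure.pi (γ 0) {y | t < Fav N y}
      ≤ Measure.pi (γ m) {y | t < Fav N y} := by
    intro m
    induction m with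
    | zero => exact le_rfl
    | succ m ih => exact ih.trans (hstep m)
  have h0 : γ 0 = fun i => Measure.map (X i) μ := by
    funext i
    simp only [hγ]
    rw [if_neg (Nat.not_lt_zero _)]
  have hn : γ n = fun i => Measure.map (Y i) μ := by
    funext i
    simp only [hγ]
    rw [if_pos i.2]
  have := hchain n
  rwa [h0, hn] at this
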